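/- arXiv:1607.06326 — 2 statements merged into one kernel-verified Lean document; each statement's English description precedes it below -/
import Mathlib

section
/- For every integer n ≥ 2, all smooth compactly supported functions u, τ : ℝⁿ → ℝ, and every real t, the anomaly evaluated along the interpolating family satisfies A(−2τ, u − tτ) = 2 · (d/dt) S(u − tτ); i.e. the breaking term along the conformal path g_t = e^{−2tτ} g_u is the t-derivative of the Einstein–Hilbert action: A(ω_t, g_t) = 2 d_t S_EH(g_t). -/
open MeasureTheory Real

noncomputable section

/-- Coordinate partial derivative `∂ᵢ f x` on `ℝⁿ = EuclideanSpace ℝ (Fin n)`. -/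
def pd (n : ℕ) (f : EuclideanSpace ℝ (Fin n) → ℝ) (i : Fin n)
    (x : EuclideanSpace ℝ (Fin n)) : ℝ :=
  fderiv ℝ f x (EuclideanSpace.single i 1)

/-- Second coordinate partial derivative `∂ᵢ∂ᵢ f x`. -/
def pd2 (n : ℕ) (f : EuclideanSpace ℝ (Fin n) → ℝ) (i : Fin n)
    (x : EuclideanSpace ℝ (Fin n)) : ℝ :=
  pd n (pd n f i) i x

/-- Scalar curvature expression of the conformally flat metric `g_v = e^{2v} δ`:
`R(v) = e^{−2v} ( −2(n−1) Σᵢ ∂ᵢ∂ᵢ v − (n−1)(n−2) Σᵢ (∂ᵢ v)² )`. -/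
def Rscal (n : ℕ) (v : EuclideanSpace ℝ (Fin n) → ℝ)
    (x : EuclideanSpace ℝ (Fin n)) : ℝ :=
  Real.exp (-2 * v x) *
    (-2 * ((n : ℝ) - 1) * ∑ i, pd2 n v i x
      - ((n : ℝ) - 1) * ((n : ℝ) - 2) * ∑ i, (pd n v i x) ^ 2)

/-- Laplacian of `g_v` acting on `f`:
`Δ_v f = −e^{−2v} ( Σᵢ ∂ᵢ∂ᵢ f + (n−2) Σᵢ ∂ᵢ v ∂ᵢ f )`. -/
def lap (n : ℕ) (v f : EuclideanSpace ℝ (Fin n) → ℝ)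
    (x : EuclideanSpace ℝ (Fin n)) : ℝ :=
  -Real.exp (-2 * v x) *
    (∑ i, pd2 n f i x + ((n : ℝ) - 2) * ∑ i, pd n v i x * pd n f i x)

/-- Gradient square `|∇f|²_v = e^{−2v} Σᵢ (∂ᵢ f)²`. -/
def gradSq (n : ℕ) (v f : EuclideanSpace ℝ (Fin n) → ℝ)
    (x : EuclideanSpace ℝ (Fin n)) : ℝ :=
  Real.exp (-2 * v x) * ∑ i, (pd n f i x) ^ 2

/-- Einstein–Hilbert action `S(u) = ∫ e^{nu} R(u) dx`. -/
def SEH (n : ℕ) (u : EuclideanSpace ℝ (Fin n) → ℝ) : ℝ :=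
  ∫ x, Real.exp ((n : ℝ) * u x) * Rscal n u x

/-- Anomaly functional
`A(φ,u) = ∫ e^{nu} ( (n−2) φ R(u) + 2(n−1) Δ_u φ ) dx`. -/
def anomaly (n : ℕ) (φ u : EuclideanSpace ℝ (Fin n) → ℝ) : ℝ :=
  ∫ x, Real.exp ((n : ℝ) * u x) *
    (((n : ℝ) - 2) * φ x * Rscal n u x + 2 * ((n : ℝ) - 1) * lap n u φ x)

/-- Wess–Zumino functional `Γ_WZ(τ,u) = ∫₀¹ A(−2τ, u − tτ) dt`. -/
def WZ (n : ℕ) (τ u : EuclideanSpace ℝ (Fin n) → ℝ) : ℝ :=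
  ∫ t in (0 : ℝ)..1,
    anomaly n (fun y => -2 * τ y) (fun y => u y - t * τ y)


/-! ### Auxiliary lemmas -/

lemma contDiff_pd {n : ℕ} {f : EuclideanSpace ℝ (Fin n) → ℝ}
    (hf : ContDiff ℝ (⊤ : ℕ∞) f) (i : Fin n) : ContDiff ℝ (⊤ : ℕ∞) (pd n f i) := by
  have h1 : ContDiff ℝ (⊤ : ℕ∞) (fderiv ℝ f) := hf.fderiv_right (by simp)
  exact (ContinuousLinearMap.apply ℝ ℝ (EuclideanSpace.single i (1:ℝ))).contDiff.comp h1

lemma contDiff_pd2 {n : ℕ} {f : EuclideanSpace ℝ (Fin n) → ℝ}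
    (hf : ContDiff ℝ (⊤ : ℕ∞) f) (i : Fin n) : ContDiff ℝ (⊤ : ℕ∞) (pd2 n f i) :=
  contDiff_pd (contDiff_pd hf i) i

lemma pd_sub_smul {n : ℕ} {f g : EuclideanSpace ℝ (Fin n) → ℝ}
    (hf : ContDiff ℝ (⊤ : ℕ∞) f) (hg : ContDiff ℝ (⊤ : ℕ∞) g) (c : ℝ) (i : Fin n)
    (x : EuclideanSpace ℝ (Fin n)) :
    pd n (fun y => f y - c * g y) i x = pd n f i x - c * pd n g i x := by
  unfold pd
  have h1 : DifferentiableAt ℝ f x := (hf.differentiable (by simp)).differentiableAt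
  have h2 : DifferentiableAt ℝ (fun y => c * g y) x :=
    ((hg.differentiable (by simp)).differentiableAt).const_mul c
  rw [fderiv_fun_sub h1 h2, fderiv_const_mul ((hg.differentiable (by simp)).differentiableAt)]
  simp

lemma pd_const_mul {n : ℕ} {g : EuclideanSpace ℝ (Fin n) → ℝ}
    (hg : ContDiff ℝ (⊤ : ℕ∞) g) (c : ℝ) (i : Fin n) (x : EuclideanSpace ℝ (Fin n)) :
    pd n (fun y => c * g y) i x = c * pd n g i x := by
  unfold pd
  rw [fderiv_const_mul ((hg.differentiable (by simp)).differentiableAt)]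
  simp

lemma pd2_sub_smul {n : ℕ} {f g : EuclideanSpace ℝ (Fin n) → ℝ}
    (hf : ContDiff ℝ (⊤ : ℕ∞) f) (hg : ContDiff ℝ (⊤ : ℕ∞) g) (c : ℝ) (i : Fin n)
    (x : EuclideanSpace ℝ (Fin n)) :
    pd2 n (fun y => f y - c * g y) i x = pd2 n f i x - c * pd2 n g i x := by
  unfold pd2
  have : pd n (fun y => f y - c * g y) i = fun y => pd n f i y - c * pd n g i y := by
    funext y; exact pd_sub_smul hf hg c i y
  rw [this]
  exact pd_sub_smul (contDiff_pd hf i) (contDiff_pd hg i) c i x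

lemma pd2_const_mul {n : ℕ} {g : EuclideanSpace ℝ (Fin n) → ℝ}
    (hg : ContDiff ℝ (⊤ : ℕ∞) g) (c : ℝ) (i : Fin n) (x : EuclideanSpace ℝ (Fin n)) :
    pd2 n (fun y => c * g y) i x = c * pd2 n g i x := by
  unfold pd2
  have : pd n (fun y => c * g y) i = fun y => c * pd n g i y := by
    funext y; exact pd_const_mul hg c i y
  rw [this]
  exact pd_const_mul (contDiff_pd hg i) c i x

lemma pd_eq_zero {n : ℕ} {f : EuclideanSpace ℝ (Fin n) → ℝ} {i : Fin n}
    {x : EuclideanSpace ℝ (Fin n)} (hx : x ∉ tsupport f) : pd n f i x = 0 := by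
  unfold pd
  have h : f =ᶠ[nhds x] 0 := notMem_tsupport_iff_eventuallyEq.mp hx
  rw [h.fderiv_eq, show (0 : EuclideanSpace ℝ (Fin n) → ℝ) = fun _ => (0:ℝ) from rfl,
    fderiv_const_apply]
  simp

lemma pd2_eq_zero {n : ℕ} {f : EuclideanSpace ℝ (Fin n) → ℝ} {i : Fin n}
    {x : EuclideanSpace ℝ (Fin n)} (hx : x ∉ tsupport f) : pd2 n f i x = 0 := by
  unfold pd2
  apply pd_eq_zero
  intro hmem
  apply hx
  have hsub : Function.support (pd n f i) ⊆ tsupport f := by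
    intro y hy
    by_contra hyc
    exact hy (pd_eq_zero hyc)
  exact closure_minimal hsub isClosed_closure hmem

def auxA0 (n : ℕ) (u τ : EuclideanSpace ℝ (Fin n) → ℝ) (x : EuclideanSpace ℝ (Fin n)) : ℝ :=
  -2 * ((n : ℝ) - 1) * ∑ i, pd2 n u i x - ((n : ℝ) - 1) * ((n : ℝ) - 2) * ∑ i, (pd n u i x) ^ 2

def auxA1 (n : ℕ) (u τ : EuclideanSpace ℝ (Fin n) → ℝ) (x : EuclideanSpace ℝ (Fin n)) : ℝ :=
  2 * ((n : ℝ) - 1) * ∑ i, pd2 n τ i x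
    + 2 * ((n : ℝ) - 1) * ((n : ℝ) - 2) * ∑ i, pd n u i x * pd n τ i x

def auxA2 (n : ℕ) (u τ : EuclideanSpace ℝ (Fin n) → ℝ) (x : EuclideanSpace ℝ (Fin n)) : ℝ :=
  -((n : ℝ) - 1) * ((n : ℝ) - 2) * ∑ i, (pd n τ i x) ^ 2

def auxF (n : ℕ) (u τ : EuclideanSpace ℝ (Fin n) → ℝ) (s : ℝ)
    (x : EuclideanSpace ℝ (Fin n)) : ℝ :=
  Real.exp (((n : ℝ) - 2) * (u x - s * τ x)) *
    (auxA0 n u τ x + s * auxA1 n u τ x + s ^ 2 * auxA2 n u τ x)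

def auxF' (n : ℕ) (u τ : EuclideanSpace ℝ (Fin n) → ℝ) (s : ℝ)
    (x : EuclideanSpace ℝ (Fin n)) : ℝ :=
  Real.exp (((n : ℝ) - 2) * (u x - s * τ x)) *
    (-(((n : ℝ) - 2) * τ x) * (auxA0 n u τ x + s * auxA1 n u τ x + s ^ 2 * auxA2 n u τ x)
      + (auxA1 n u τ x + 2 * s * auxA2 n u τ x))

section Aux
variable {n : ℕ} {u τ : EuclideanSpace ℝ (Fin n) → ℝ}
  (hu : ContDiff ℝ (⊤ : ℕ∞) u) (hτ : ContDiff ℝ (⊤ : ℕ∞) τ)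

lemma sum_sq_split (s : ℝ) (x : EuclideanSpace ℝ (Fin n)) :
    ∑ i, (pd n u i x - s * pd n τ i x) ^ 2
      = ∑ i, (pd n u i x) ^ 2 - 2 * s * ∑ i, pd n u i x * pd n τ i x
        + s ^ 2 * ∑ i, (pd n τ i x) ^ 2 := by
  rw [Finset.mul_sum, Finset.mul_sum, ← Finset.sum_sub_distrib, ← Finset.sum_add_distrib]
  exact Finset.sum_congr rfl fun i _ => by ring

include hu hτ in
lemma seh_pointwise (s : ℝ) (x : EuclideanSpace ℝ (Fin n)) :
    Real.exp ((n : ℝ) * (u x - s * τ x)) * Rscal n (fun y => u y - s * τ y) x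
      = auxF n u τ s x := by
  simp only [Rscal, auxF, auxA0, auxA1, auxA2, pd_sub_smul hu hτ s, pd2_sub_smul hu hτ s]
  rw [Finset.sum_sub_distrib, ← Finset.mul_sum, sum_sq_split (u := u) (τ := τ) s x,
    show ((n : ℝ) - 2) * (u x - s * τ x)
      = (n : ℝ) * (u x - s * τ x) + -2 * (u x - s * τ x) by ring, Real.exp_add]
  ring

include hu hτ in
lemma anomaly_pointwise (t : ℝ) (x : EuclideanSpace ℝ (Fin n)) :
    Real.exp ((n : ℝ) * (u x - t * τ x)) *
      (((n : ℝ) - 2) * (-2 * τ x) * Rscal n (fun y => u y - t * τ y) x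
        + 2 * ((n : ℝ) - 1) * lap n (fun y => u y - t * τ y) (fun y => -2 * τ y) x)
      = 2 * auxF' n u τ t x := by
  have hs3 : ∑ i, ((pd n u i x - t * pd n τ i x) * (-2 * pd n τ i x))
      = -2 * ∑ i, pd n u i x * pd n τ i x + 2 * t * ∑ i, (pd n τ i x) ^ 2 := by
    rw [Finset.mul_sum, Finset.mul_sum, ← Finset.sum_add_distrib]
    exact Finset.sum_congr rfl fun i _ => by ring
  simp only [Rscal, lap, auxF', auxA0, auxA1, auxA2, pd_sub_smul hu hτ t,
    pd2_sub_smul hu hτ t, pd_const_mul hτ, pd2_const_mul hτ]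
  have h4 : ∑ i, t * pd2 n τ i x = t * ∑ i, pd2 n τ i x := by rw [Finset.mul_sum]
  have h5 : ∑ i, (-2 : ℝ) * pd2 n τ i x = -2 * ∑ i, pd2 n τ i x := by rw [Finset.mul_sum]
  rw [hs3, Finset.sum_sub_distrib, h4, h5, sum_sq_split (u := u) (τ := τ) t x,
    show ((n : ℝ) - 2) * (u x - t * τ x)
      = (n : ℝ) * (u x - t * τ x) + -2 * (u x - t * τ x) by ring, Real.exp_add]
  ring

lemma hasDerivAt_auxF (s : ℝ) (x : EuclideanSpace ℝ (Fin n)) :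
    HasDerivAt (fun s' => auxF n u τ s' x) (auxF' n u τ s x) s := by
  have hin : HasDerivAt (fun s' : ℝ => ((n : ℝ) - 2) * (u x - s' * τ x))
      (-(((n : ℝ) - 2) * τ x)) s := by
    have h := (((hasDerivAt_id s).mul_const (τ x)).const_sub (u x)).const_mul ((n : ℝ) - 2)
    exact h.congr_deriv (by ring)
  have hpoly : HasDerivAt
      (fun s' : ℝ => auxA0 n u τ x + s' * auxA1 n u τ x + s' ^ 2 * auxA2 n u τ x)
      (auxA1 n u τ x + 2 * s * auxA2 n u τ x) s := by
    have h := (((hasDerivAt_id s).mul_const (auxA1 n u τ x)).const_add (auxA0 n u τ x)).add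
      ((hasDerivAt_pow 2 s).mul_const (auxA2 n u τ x))
    exact h.congr_deriv (by ring)
  have h := hin.exp.mul hpoly
  exact h.congr_deriv (by unfold auxF'; ring)

lemma auxF_zero {s : ℝ} {x : EuclideanSpace ℝ (Fin n)}
    (hx : x ∉ tsupport u ∪ tsupport τ) : auxF n u τ s x = 0 := by
  have hxu : x ∉ tsupport u := fun h => hx (Or.inl h)
  have hxτ : x ∉ tsupport τ := fun h => hx (Or.inr h)
  simp [auxF, auxA0, auxA1, auxA2, pd_eq_zero hxu, pd2_eq_zero hxu,
    pd_eq_zero hxτ, pd2_eq_zero hxτ]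

lemma auxF'_zero {s : ℝ} {x : EuclideanSpace ℝ (Fin n)}
    (hx : x ∉ tsupport u ∪ tsupport τ) : auxF' n u τ s x = 0 := by
  have hxu : x ∉ tsupport u := fun h => hx (Or.inl h)
  have hxτ : x ∉ tsupport τ := fun h => hx (Or.inr h)
  simp [auxF', auxA0, auxA1, auxA2, pd_eq_zero hxu, pd2_eq_zero hxu,
    pd_eq_zero hxτ, pd2_eq_zero hxτ]

include hu hτ in
lemma cont_auxF' :
    Continuous (fun p : ℝ × EuclideanSpace ℝ (Fin n) => auxF' n u τ p.1 p.2) := by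
  have hpu : ∀ i : Fin n, Continuous (pd n u i) := fun i => (contDiff_pd hu i).continuous
  have hpτ : ∀ i : Fin n, Continuous (pd n τ i) := fun i => (contDiff_pd hτ i).continuous
  have hpu2 : ∀ i : Fin n, Continuous (pd2 n u i) := fun i => (contDiff_pd2 hu i).continuous
  have hpτ2 : ∀ i : Fin n, Continuous (pd2 n τ i) := fun i => (contDiff_pd2 hτ i).continuous
  have hA0 : Continuous (auxA0 n u τ) := by
    unfold auxA0
    exact (continuous_const.mul (continuous_finset_sum _ fun i _ => hpu2 i)).sub
      (continuous_const.mul (continuous_finset_sum _ fun i _ => (hpu i).pow 2))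
  have hA1 : Continuous (auxA1 n u τ) := by
    unfold auxA1
    exact (continuous_const.mul (continuous_finset_sum _ fun i _ => hpτ2 i)).add
      (continuous_const.mul (continuous_finset_sum _ fun i _ => (hpu i).mul (hpτ i)))
  have hA2 : Continuous (auxA2 n u τ) := by
    unfold auxA2
    exact continuous_const.mul (continuous_finset_sum _ fun i _ => (hpτ i).pow 2)
  have hcu := hu.continuous
  have hcτ := hτ.continuous
  unfold auxF'
  fun_prop

include hu hτ in
lemma cont_auxF (s : ℝ) : Continuous (auxF n u τ s) := by
  have hpu : ∀ i : Fin n, Continuous (pd n u i) := fun i => (contDiff_pd hu i).continuous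
  have hpτ : ∀ i : Fin n, Continuous (pd n τ i) := fun i => (contDiff_pd hτ i).continuous
  have hpu2 : ∀ i : Fin n, Continuous (pd2 n u i) := fun i => (contDiff_pd2 hu i).continuous
  have hpτ2 : ∀ i : Fin n, Continuous (pd2 n τ i) := fun i => (contDiff_pd2 hτ i).continuous
  have hA0 : Continuous (auxA0 n u τ) := by
    unfold auxA0
    exact (continuous_const.mul (continuous_finset_sum _ fun i _ => hpu2 i)).sub
      (continuous_const.mul (continuous_finset_sum _ fun i _ => (hpu i).pow 2))
  have hA1 : Continuous (auxA1 n u τ) := by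
    unfold auxA1
    exact (continuous_const.mul (continuous_finset_sum _ fun i _ => hpτ2 i)).add
      (continuous_const.mul (continuous_finset_sum _ fun i _ => (hpu i).mul (hpτ i)))
  have hA2 : Continuous (auxA2 n u τ) := by
    unfold auxA2
    exact continuous_const.mul (continuous_finset_sum _ fun i _ => (hpτ i).pow 2)
  have hcu := hu.continuous
  have hcτ := hτ.continuous
  unfold auxF
  fun_prop

end Aux

/-- Along the conformal path `g_t = e^{−2tτ} g_u`, the anomaly is the
`t`-derivative of the Einstein–Hilbert action:
`A(ω_t, g_t) = 2 d_t S_EH(g_t)`. -/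
theorem anomaly_along_path_is_derivative_of_EH
    (n : ℕ) (hn : 2 ≤ n)
    (u τ : EuclideanSpace ℝ (Fin n) → ℝ)
    (hu : ContDiff ℝ (⊤ : ℕ∞) u) (hτ : ContDiff ℝ (⊤ : ℕ∞) τ)
    (hcu : HasCompactSupport u) (hcτ : HasCompactSupport τ)
    (t : ℝ) :
    ∃ d : ℝ,
      HasDerivAt (fun t' : ℝ => SEH n (fun y => u y - t' * τ y)) d t ∧
      anomaly n (fun y => -2 * τ y) (fun y => u y - t * τ y) = 2 * d := by
  classical
  have hK : IsCompact (tsupport u ∪ tsupport τ) := hcu.union hcτ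
  have hKm : MeasurableSet (tsupport u ∪ tsupport τ) := hK.isClosed.measurableSet
  obtain ⟨M, hM⟩ := ((isCompact_closedBall t 1).prod hK).exists_bound_of_continuousOn
    (cont_auxF' hu hτ).continuousOn
  have hF_int : Integrable (auxF n u τ t) :=
    (cont_auxF hu hτ t).integrable_of_hasCompactSupport
      (HasCompactSupport.intro hK fun x hx => auxF_zero hx)
  have hF'_meas : AEStronglyMeasurable (auxF' n u τ t) volume :=
    ((cont_auxF' hu hτ).comp (Continuous.prodMk_right t)).aestronglyMeasurable
  have h_bound : ∀ᵐ x : EuclideanSpace ℝ (Fin n), ∀ s ∈ Metric.ball t 1,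
      ‖auxF' n u τ s x‖ ≤ (tsupport u ∪ tsupport τ).indicator (fun _ => M) x := by
    refine Filter.Eventually.of_forall fun x s hs => ?_
    by_cases hx : x ∈ tsupport u ∪ tsupport τ
    · rw [Set.indicator_of_mem hx]
      exact hM (s, x) ⟨Metric.ball_subset_closedBall hs, hx⟩
    · rw [Set.indicator_of_notMem hx, auxF'_zero hx]
      simp
  have bound_int : Integrable ((tsupport u ∪ tsupport τ).indicator (fun _ => M)) := by
    rw [integrable_indicator_iff hKm]
    exact integrableOn_const hK.measure_lt_top.ne
  have h_diff : ∀ᵐ x : EuclideanSpace ℝ (Fin n), ∀ s ∈ Metric.ball t 1,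
      HasDerivAt (fun s' => auxF n u τ s' x) (auxF' n u τ s x) s :=
    Filter.Eventually.of_forall fun x s _ => hasDerivAt_auxF s x
  have hmain := hasDerivAt_integral_of_dominated_loc_of_deriv_le
    (F := fun s x => auxF n u τ s x) (F' := fun s x => auxF' n u τ s x)
    (Metric.ball_mem_nhds t one_pos)
    (Filter.Eventually.of_forall fun s => (cont_auxF hu hτ s).aestronglyMeasurable)
    hF_int hF'_meas h_bound bound_int h_diff
  refine ⟨∫ x, auxF' n u τ t x, ?_, ?_⟩
  · have heq : (fun s : ℝ => SEH n (fun y => u y - s * τ y))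
        = fun s => ∫ x, auxF n u τ s x := by
      funext s
      unfold SEH
      congr 1
      funext x
      exact seh_pointwise hu hτ s x
    rw [heq]
    exact hmain.2
  · calc anomaly n (fun y => -2 * τ y) (fun y => u y - t * τ y)
        = ∫ x, 2 * auxF' n u τ t x := by
          unfold anomaly
          congr 1
          funext x
          exact anomaly_pointwise hu hτ t x
      _ = 2 * ∫ x, auxF' n u τ t x := integral_const_mul 2 _
end
end

section
/- For every integer n ≥ 2 and all smooth compactly supported functions u, τ : ℝⁿ → ℝ, the Wess–Zumino functional has the explicit closed form Γ_WZ(τ,u) := ∫₀¹ A(−2τ, u − tτ) dt = 2·∫_{ℝⁿ} e^{nu}·( e^{(2−n)τ}·( R(u) − 2(n−1)·Δ_u τ − (n−2)(n−1)·|∇τ|²_u ) − R(u) ) dx; in particular the t-integration can be performed explicitly. -/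
open MeasureTheory Real

noncomputable section

section helpers
variable {n : ℕ} {f u τ : EuclideanSpace ℝ (Fin n) → ℝ}

lemma pd_contDiff (hf : ContDiff ℝ (⊤ : ℕ∞) f) (i : Fin n) : ContDiff ℝ (⊤ : ℕ∞) (pd n f i) :=
  (hf.fderiv_right (by simp)).clm_apply contDiff_const

lemma pd_lin (hu : ContDiff ℝ (⊤ : ℕ∞) u) (hτ : ContDiff ℝ (⊤ : ℕ∞) τ) (t : ℝ) (i : Fin n)
    (x : EuclideanSpace ℝ (Fin n)) :
    pd n (fun y => u y - t * τ y) i x = pd n u i x - t * pd n τ i x := by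
  unfold pd
  have h1 := (hu.differentiable (by simp) x).hasFDerivAt
  have h2 := ((hτ.differentiable (by simp) x).hasFDerivAt).const_mul t
  rw [(h1.fun_sub h2).fderiv]
  simp

lemma pd_cmul (hf : ContDiff ℝ (⊤ : ℕ∞) f) (c : ℝ) (i : Fin n) (x : EuclideanSpace ℝ (Fin n)) :
    pd n (fun y => c * f y) i x = c * pd n f i x := by
  unfold pd
  rw [((hf.differentiable (by simp) x).hasFDerivAt.const_mul c).fderiv]
  simp

lemma pd2_lin (hu : ContDiff ℝ (⊤ : ℕ∞) u) (hτ : ContDiff ℝ (⊤ : ℕ∞) τ) (t : ℝ) (i : Fin n)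
    (x : EuclideanSpace ℝ (Fin n)) :
    pd2 n (fun y => u y - t * τ y) i x = pd2 n u i x - t * pd2 n τ i x := by
  unfold pd2
  have hfun : pd n (fun y => u y - t * τ y) i = fun z => pd n u i z - t * pd n τ i z :=
    funext fun z => pd_lin hu hτ t i z
  rw [hfun]
  exact pd_lin (pd_contDiff hu i) (pd_contDiff hτ i) t i x

lemma pd2_cmul (hf : ContDiff ℝ (⊤ : ℕ∞) f) (c : ℝ) (i : Fin n) (x : EuclideanSpace ℝ (Fin n)) :
    pd2 n (fun y => c * f y) i x = c * pd2 n f i x := by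
  unfold pd2
  have hfun : pd n (fun y => c * f y) i = fun z => c * pd n f i z :=
    funext fun z => pd_cmul hf c i z
  rw [hfun]
  exact pd_cmul (pd_contDiff hf i) c i x

lemma pd_zero {x : EuclideanSpace ℝ (Fin n)} (hx : x ∉ tsupport f) (i : Fin n) :
    pd n f i x = 0 := by
  unfold pd
  have : fderiv ℝ f x = 0 := by
    by_contra h
    exact hx (support_fderiv_subset ℝ (by simpa [Function.mem_support] using h))
  simp [this]

lemma tsupport_pd_subset (i : Fin n) : tsupport (pd n f i) ⊆ tsupport f := by
  apply closure_minimal _ (isClosed_tsupport f)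
  intro x hx
  by_contra hxf
  exact hx (pd_zero hxf i)

lemma pd2_zero {x : EuclideanSpace ℝ (Fin n)} (hx : x ∉ tsupport f) (i : Fin n) :
    pd2 n f i x = 0 :=
  pd_zero (fun h => hx (tsupport_pd_subset i h)) i

end helpers

/-- explicit atom form of e^{nv_t} R(v_t), v_t = u - tτ -/
def gE (n : ℕ) (u τ : EuclideanSpace ℝ (Fin n) → ℝ) (t : ℝ)
    (x : EuclideanSpace ℝ (Fin n)) : ℝ :=
  Real.exp ((n:ℝ)*(u x - t*τ x)) * (Real.exp (-2*(u x - t*τ x)) *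
    (-2*((n:ℝ)-1)*((∑ i, pd2 n u i x) - t*(∑ i, pd2 n τ i x))
      - ((n:ℝ)-1)*((n:ℝ)-2)*((∑ i, (pd n u i x)^2) - 2*t*(∑ i, pd n u i x * pd n τ i x)
          + t^2*(∑ i, (pd n τ i x)^2))))

/-- explicit atom form of the anomaly integrand -/
def aintE (n : ℕ) (u τ : EuclideanSpace ℝ (Fin n) → ℝ) (t : ℝ)
    (x : EuclideanSpace ℝ (Fin n)) : ℝ :=
  Real.exp ((n:ℝ)*(u x - t*τ x)) *
    (((n:ℝ)-2)*(-2*τ x)*(Real.exp (-2*(u x - t*τ x)) *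
        (-2*((n:ℝ)-1)*((∑ i, pd2 n u i x) - t*(∑ i, pd2 n τ i x))
          - ((n:ℝ)-1)*((n:ℝ)-2)*((∑ i, (pd n u i x)^2) - 2*t*(∑ i, pd n u i x * pd n τ i x)
              + t^2*(∑ i, (pd n τ i x)^2))))
      + 2*((n:ℝ)-1)*(Real.exp (-2*(u x - t*τ x)) *
        (2*(∑ i, pd2 n τ i x) + 2*((n:ℝ)-2)*((∑ i, pd n u i x * pd n τ i x)
            - t*(∑ i, (pd n τ i x)^2)))))

lemma deriv_key (k p q A B C D E t : ℝ) :
    HasDerivAt (fun s : ℝ => 2 * (Real.exp (k*(p - s*q)) * (Real.exp (-2*(p - s*q)) *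
        (-2*(k-1)*(A - s*B) - (k-1)*(k-2)*(C - 2*s*D + s^2*E)))))
      (Real.exp (k*(p - t*q)) *
        ((k-2)*(-2*q)*(Real.exp (-2*(p - t*q)) *
            (-2*(k-1)*(A - t*B) - (k-1)*(k-2)*(C - 2*t*D + t^2*E)))
          + 2*(k-1)*(Real.exp (-2*(p - t*q)) * (2*B + 2*(k-2)*(D - t*E))))) t := by
  have hl : HasDerivAt (fun s : ℝ => p - s*q) (-q) t := by
    simpa using ((hasDerivAt_id t).mul_const q).const_sub p
  have hα : HasDerivAt (fun s : ℝ => Real.exp (k*(p - s*q)))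
      (Real.exp (k*(p - t*q)) * (k * -q)) t := (hl.const_mul k).exp
  have hβ : HasDerivAt (fun s : ℝ => Real.exp (-2*(p - s*q)))
      (Real.exp (-2*(p - t*q)) * (-2 * -q)) t := (hl.const_mul (-2:ℝ)).exp
  have h1 : HasDerivAt (fun s : ℝ => A - s*B) (-B) t := by
    simpa using ((hasDerivAt_id t).mul_const B).const_sub A
  have h3 : HasDerivAt (fun s : ℝ => 2*s*D) (2*D) t := by
    simpa using ((hasDerivAt_id t).const_mul 2).mul_const D
  have h4 : HasDerivAt (fun s : ℝ => s^2*E) (2*t*E) t := by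
    simpa using (hasDerivAt_pow 2 t).mul_const E
  have h2 : HasDerivAt (fun s : ℝ => C - 2*s*D + s^2*E) (0 - 2*D + 2*t*E) t :=
    ((hasDerivAt_const t C).sub h3).add h4
  have hQ : HasDerivAt (fun s : ℝ => -2*(k-1)*(A - s*B) - (k-1)*(k-2)*(C - 2*s*D + s^2*E))
      (-2*(k-1)*(-B) - (k-1)*(k-2)*(0 - 2*D + 2*t*E)) t :=
    (h1.const_mul _).sub (h2.const_mul _)
  have hfin := (hα.fun_mul (hβ.fun_mul hQ)).const_mul 2
  refine hfin.congr_deriv ?_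
  ring

lemma hasDerivAt_gE {n : ℕ} (u τ : EuclideanSpace ℝ (Fin n) → ℝ) (t : ℝ)
    (x : EuclideanSpace ℝ (Fin n)) :
    HasDerivAt (fun s => 2 * gE n u τ s x) (aintE n u τ t x) t := by
  simp only [gE, aintE]
  exact deriv_key (n:ℝ) (u x) (τ x) (∑ i, pd2 n u i x) (∑ i, pd2 n τ i x)
    (∑ i, (pd n u i x)^2) (∑ i, pd n u i x * pd n τ i x) (∑ i, (pd n τ i x)^2) t

lemma aint_eq {n : ℕ} {u τ : EuclideanSpace ℝ (Fin n) → ℝ}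
    (hu : ContDiff ℝ (⊤ : ℕ∞) u) (hτ : ContDiff ℝ (⊤ : ℕ∞) τ) (t : ℝ) (x : EuclideanSpace ℝ (Fin n)) :
    Real.exp ((n:ℝ) * (u x - t*τ x)) *
      (((n:ℝ)-2) * (-2*τ x) * Rscal n (fun y => u y - t*τ y) x
        + 2*((n:ℝ)-1) * lap n (fun y => u y - t*τ y) (fun y => -2*τ y) x)
      = aintE n u τ t x := by
  have hs1 : (∑ i, pd2 n (fun y => u y - t * τ y) i x)
      = (∑ i, pd2 n u i x) - t * ∑ i, pd2 n τ i x := by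
    rw [Finset.sum_congr rfl fun i _ => pd2_lin hu hτ t i x, Finset.sum_sub_distrib,
      ← Finset.mul_sum]
  have hs2 : (∑ i, (pd n (fun y => u y - t * τ y) i x)^2)
      = (∑ i, (pd n u i x)^2) - 2*t*(∑ i, pd n u i x * pd n τ i x)
          + t^2*(∑ i, (pd n τ i x)^2) := by
    have e1 : ∀ i : Fin n, (pd n (fun y => u y - t * τ y) i x)^2
        = (pd n u i x)^2 - 2*t*(pd n u i x * pd n τ i x) + t^2*(pd n τ i x)^2 := fun i => by
      rw [pd_lin hu hτ t i x]; ring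
    rw [Finset.sum_congr rfl fun i _ => e1 i, Finset.sum_add_distrib, Finset.sum_sub_distrib,
      ← Finset.mul_sum, ← Finset.mul_sum]
  have hs3 : (∑ i, pd2 n (fun y => -2 * τ y) i x) = -2 * ∑ i, pd2 n τ i x := by
    rw [Finset.sum_congr rfl fun i _ => pd2_cmul hτ (-2) i x, ← Finset.mul_sum]
  have hs4 : (∑ i, pd n (fun y => u y - t * τ y) i x * pd n (fun y => -2 * τ y) i x)
      = -2*(∑ i, pd n u i x * pd n τ i x) + 2*t*(∑ i, (pd n τ i x)^2) := by
    have e1 : ∀ i : Fin n, pd n (fun y => u y - t * τ y) i x * pd n (fun y => -2 * τ y) i x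
        = -2*(pd n u i x * pd n τ i x) + 2*t*(pd n τ i x)^2 := fun i => by
      rw [pd_lin hu hτ t i x, pd_cmul hτ (-2) i x]; ring
    rw [Finset.sum_congr rfl fun i _ => e1 i, Finset.sum_add_distrib,
      ← Finset.mul_sum, ← Finset.mul_sum]
  simp only [Rscal, lap]
  rw [hs1, hs2, hs3, hs4]
  simp only [aintE]
  ring

lemma closed_form_key (k p q A B C D E : ℝ) :
    2 * (Real.exp (k*(p - 1*q)) * (Real.exp (-2*(p - 1*q)) *
        (-2*(k-1)*(A - 1*B) - (k-1)*(k-2)*(C - 2*1*D + 1^2*E))))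
    - 2 * (Real.exp (k*(p - 0*q)) * (Real.exp (-2*(p - 0*q)) *
        (-2*(k-1)*(A - 0*B) - (k-1)*(k-2)*(C - 2*0*D + 0^2*E)))) =
    2 * (Real.exp (k*p) *
      (Real.exp ((2-k)*q) *
        (Real.exp (-2*p) * (-2*(k-1)*A - (k-1)*(k-2)*C)
          - 2*(k-1)*(-Real.exp (-2*p) * (B + (k-2)*D))
          - (k-2)*(k-1)*(Real.exp (-2*p) * E))
        - Real.exp (-2*p) * (-2*(k-1)*A - (k-1)*(k-2)*C))) := by
  have h0 : p - 0*q = p := by ring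
  rw [h0]
  have key : Real.exp (k*(p - 1*q)) * Real.exp (-2*(p - 1*q))
      = Real.exp (k*p) * (Real.exp ((2-k)*q) * Real.exp (-2*p)) := by
    rw [← Real.exp_add, ← Real.exp_add, ← Real.exp_add, Real.exp_eq_exp]
    ring
  linear_combination (2*(-2*(k-1)*(A - 1*B) - (k-1)*(k-2)*(C - 2*1*D + 1^2*E))) * key

lemma gE_closed {n : ℕ} (u τ : EuclideanSpace ℝ (Fin n) → ℝ) (x : EuclideanSpace ℝ (Fin n)) :
    2 * gE n u τ 1 x - 2 * gE n u τ 0 x =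
    2 * (Real.exp ((n:ℝ) * u x) *
      (Real.exp ((2 - (n:ℝ)) * τ x) *
        (Rscal n u x - 2 * ((n:ℝ) - 1) * lap n u τ x
          - ((n:ℝ) - 2) * ((n:ℝ) - 1) * gradSq n u τ x)
        - Rscal n u x)) := by
  simp only [gE, Rscal, lap, gradSq]
  exact closed_form_key (n:ℝ) (u x) (τ x) (∑ i, pd2 n u i x) (∑ i, pd2 n τ i x)
    (∑ i, (pd n u i x)^2) (∑ i, pd n u i x * pd n τ i x) (∑ i, (pd n τ i x)^2)

lemma aint_zero {n : ℕ} {u τ : EuclideanSpace ℝ (Fin n) → ℝ} {x : EuclideanSpace ℝ (Fin n)}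
    (hx : x ∉ tsupport u ∪ tsupport τ) (t : ℝ) :
    aintE n u τ t x = 0 := by
  have hxτ : x ∉ tsupport τ := fun h => hx (Set.mem_union_right _ h)
  have hτx : τ x = 0 := image_eq_zero_of_notMem_tsupport hxτ
  have hB : (∑ i, pd2 n τ i x) = 0 := Finset.sum_eq_zero fun i _ => pd2_zero hxτ i
  have hD : (∑ i, pd n u i x * pd n τ i x) = 0 := Finset.sum_eq_zero fun i _ => by
    rw [pd_zero hxτ i, mul_zero]
  have hE : (∑ i, (pd n τ i x)^2) = 0 := Finset.sum_eq_zero fun i _ => by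
    rw [pd_zero hxτ i]; ring
  simp only [aintE, hτx, hB, hD, hE]
  ring

lemma cont_aintE {n : ℕ} {u τ : EuclideanSpace ℝ (Fin n) → ℝ}
    (hu : ContDiff ℝ (⊤ : ℕ∞) u) (hτ : ContDiff ℝ (⊤ : ℕ∞) τ) :
    Continuous fun p : ℝ × EuclideanSpace ℝ (Fin n) => aintE n u τ p.1 p.2 := by
  have hcu : Continuous u := hu.continuous
  have hcτ : Continuous τ := hτ.continuous
  have hA : Continuous fun x : EuclideanSpace ℝ (Fin n) => ∑ i, pd2 n u i x :=
    continuous_finset_sum _ fun i _ => (pd_contDiff (pd_contDiff hu i) i).continuous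
  have hB : Continuous fun x : EuclideanSpace ℝ (Fin n) => ∑ i, pd2 n τ i x :=
    continuous_finset_sum _ fun i _ => (pd_contDiff (pd_contDiff hτ i) i).continuous
  have hC : Continuous fun x : EuclideanSpace ℝ (Fin n) => ∑ i, (pd n u i x)^2 :=
    continuous_finset_sum _ fun i _ => ((pd_contDiff hu i).continuous.pow 2)
  have hD : Continuous fun x : EuclideanSpace ℝ (Fin n) => ∑ i, pd n u i x * pd n τ i x :=
    continuous_finset_sum _ fun i _ =>
      ((pd_contDiff hu i).continuous.mul (pd_contDiff hτ i).continuous)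
  have hE : Continuous fun x : EuclideanSpace ℝ (Fin n) => ∑ i, (pd n τ i x)^2 :=
    continuous_finset_sum _ fun i _ => ((pd_contDiff hτ i).continuous.pow 2)
  have h1 : ∀ i, Continuous (pd n u i) := fun i => (pd_contDiff hu i).continuous
  have h2 : ∀ i, Continuous (pd n τ i) := fun i => (pd_contDiff hτ i).continuous
  have h3 : ∀ i, Continuous (pd2 n u i) := fun i => (pd_contDiff (pd_contDiff hu i) i).continuous
  have h4 : ∀ i, Continuous (pd2 n τ i) := fun i => (pd_contDiff (pd_contDiff hτ i) i).continuous
  unfold aintE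
  fun_prop

lemma cont_aintE_left {n : ℕ} (u τ : EuclideanSpace ℝ (Fin n) → ℝ)
    (x : EuclideanSpace ℝ (Fin n)) : Continuous fun t : ℝ => aintE n u τ t x := by
  unfold aintE
  fun_prop

set_option maxHeartbeats 1000000

/-- Explicit closed form of the Wess–Zumino functional:
the `t`-integration can be performed explicitly. -/
theorem wess_zumino_functional_closed_form
    (n : ℕ) (hn : 2 ≤ n)
    (u τ : EuclideanSpace ℝ (Fin n) → ℝ)
    (hu : ContDiff ℝ (⊤ : ℕ∞) u) (hτ : ContDiff ℝ (⊤ : ℕ∞) τ)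
    (hcu : HasCompactSupport u) (hcτ : HasCompactSupport τ) :
    WZ n τ u =
      2 * ∫ x, Real.exp ((n : ℝ) * u x) *
        (Real.exp ((2 - (n : ℝ)) * τ x) *
          (Rscal n u x - 2 * ((n : ℝ) - 1) * lap n u τ x
            - ((n : ℝ) - 2) * ((n : ℝ) - 1) * gradSq n u τ x)
          - Rscal n u x) := by
  have hKc : IsCompact (tsupport u ∪ tsupport τ) := hcu.union hcτ
  have hKm : MeasurableSet (tsupport u ∪ tsupport τ) :=
    ((isClosed_tsupport u).union (isClosed_tsupport τ)).measurableSet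
  haveI : IsFiniteMeasure (volume.restrict (Set.Ioc (0:ℝ) 1)) :=
    ⟨by rw [Measure.restrict_apply_univ]; exact measure_Ioc_lt_top⟩
  have h1 : WZ n τ u = ∫ t in (0:ℝ)..1, ∫ x, aintE n u τ t x := by
    unfold WZ anomaly
    refine intervalIntegral.integral_congr fun t _ => ?_
    exact integral_congr_ae (Filter.Eventually.of_forall fun x => aint_eq hu hτ t x)
  have hint : Integrable (Function.uncurry fun t x => aintE n u τ t x)
      ((volume.restrict (Set.Ioc (0:ℝ) 1)).prod volume) := by
    obtain ⟨M, hM⟩ := (isCompact_Icc.prod hKc).exists_bound_of_continuousOn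
      (cont_aintE hu hτ).continuousOn
    have hgi : Integrable (fun p : ℝ × EuclideanSpace ℝ (Fin n) =>
        (tsupport u ∪ tsupport τ).indicator (fun _ => M) p.2)
        ((volume.restrict (Set.Ioc (0:ℝ) 1)).prod volume) := by
      have hind : Integrable ((tsupport u ∪ tsupport τ).indicator (fun _ => M)) volume :=
        ((integrableOn_const_iff (C := M) enorm_ne_top).mpr (Or.inr hKc.measure_lt_top)).integrable_indicator hKm
      simpa using (integrable_const (1:ℝ)).mul_prod hind
    refine hgi.mono' ((cont_aintE hu hτ).aestronglyMeasurable) ?_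
    have hae : ∀ᵐ p : ℝ × EuclideanSpace ℝ (Fin n)
        ∂((volume.restrict (Set.Ioc (0:ℝ) 1)).prod volume), p.1 ∈ Set.Ioc (0:ℝ) 1 := by
      rw [ae_iff]
      have hset : {p : ℝ × EuclideanSpace ℝ (Fin n) | ¬ p.1 ∈ Set.Ioc (0:ℝ) 1}
          = (Set.Ioc (0:ℝ) 1)ᶜ ×ˢ (Set.univ : Set (EuclideanSpace ℝ (Fin n))) := by
        ext p; simp [Set.mem_prod]
      rw [hset, Measure.prod_prod, Measure.restrict_apply measurableSet_Ioc.compl]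
      simp
    filter_upwards [hae] with p hp
    by_cases hxK : p.2 ∈ tsupport u ∪ tsupport τ
    · rw [Set.indicator_of_mem hxK]
      exact hM p ⟨Set.Ioc_subset_Icc_self hp, hxK⟩
    · rw [Set.indicator_of_notMem hxK]
      have hz : aintE n u τ p.1 p.2 = 0 := aint_zero hxK p.1
      simp [Function.uncurry, hz]
  have h2 : ∀ x, (∫ t in Set.Ioc (0:ℝ) 1, aintE n u τ t x)
      = 2 * (Real.exp ((n:ℝ) * u x) *
        (Real.exp ((2 - (n:ℝ)) * τ x) *
          (Rscal n u x - 2 * ((n:ℝ) - 1) * lap n u τ x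
            - ((n:ℝ) - 2) * ((n:ℝ) - 1) * gradSq n u τ x)
          - Rscal n u x)) := by
    intro x
    have hcont : Continuous fun t => aintE n u τ t x := cont_aintE_left u τ x
    have hftc : (∫ t in (0:ℝ)..1, aintE n u τ t x) = 2 * gE n u τ 1 x - 2 * gE n u τ 0 x :=
      intervalIntegral.integral_eq_sub_of_hasDerivAt
        (fun t _ => hasDerivAt_gE u τ t x) (hcont.intervalIntegrable 0 1)
    rw [← intervalIntegral.integral_of_le zero_le_one, hftc]
    exact gE_closed u τ x
  rw [h1, intervalIntegral.integral_of_le zero_le_one, integral_integral_swap hint]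
  calc (∫ x, ∫ t in Set.Ioc (0:ℝ) 1, aintE n u τ t x)
      = ∫ x, 2 * (Real.exp ((n:ℝ) * u x) *
          (Real.exp ((2 - (n:ℝ)) * τ x) *
            (Rscal n u x - 2 * ((n:ℝ) - 1) * lap n u τ x
              - ((n:ℝ) - 2) * ((n:ℝ) - 1) * gradSq n u τ x)
            - Rscal n u x)) := integral_congr_ae (Filter.Eventually.of_forall h2)
    _ = 2 * ∫ x, Real.exp ((n:ℝ) * u x) *
          (Real.exp ((2 - (n:ℝ)) * τ x) *
            (Rscal n u x - 2 * ((n:ℝ) - 1) * lap n u τ x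
              - ((n:ℝ) - 2) * ((n:ℝ) - 1) * gradSq n u τ x)
            - Rscal n u x) := integral_const_mul _ _
end
end
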